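/- arXiv:1207.4545 — 3 statements merged into one kernel-verified Lean document; each statement's English description precedes it below -/
import Mathlib

section
/- Let n be an odd positive integer and let x be a complex number such that cos(x + kπ/n) ≠ 0 for every integer k with 0 ≤ k ≤ n−1. Then ∑_{k=0}^{n-1} tan(x + kπ/n) = n · tan(nx). -/
/-!
Since `tan z = -i + 2i / (1 + e^{2iz})`, and the shift `x ↦ x + kπ/n` multiplies `w = e^{2ix}` by
`ζ^k` with `ζ = e^{2πi/n}`, the claim reduces to `∑_k 1 / (1 + wζ^k) = n / (1 + w^n)` for odd `n`.
Substituting `a = -w`, this is `∑_k 1 / (1 - aζ^k) = n / (1 - a^n)`: expanding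
`(1 - a^n) / (1 - aζ^k)` as the geometric sum `∑_i (aζ^k)^i` and summing over `k`, only `i = 0`
survives, because `∑_k ζ^{ik} = 0` for `0 < i < n`.
-/

open Finset

namespace IsPrimitiveRoot

variable {K : Type*} [Field K] {ζ : K} {n : ℕ}

theorem sum_sum_mul_pow_pow_eq (hζ : IsPrimitiveRoot ζ n) (a : K) :
    ∑ k ∈ range n, ∑ i ∈ range n, (a * ζ ^ k) ^ i = n := by
  rw [sum_comm]
  have hvanish : ∀ i ∈ range n, i ≠ 0 → ∑ k ∈ range n, (a * ζ ^ k) ^ i = 0 := by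
    intro i hi hi0
    have hζi : ζ ^ i ≠ 1 := hζ.pow_ne_one_of_pos_of_lt hi0 (mem_range.mp hi)
    have hζin : (ζ ^ i) ^ n = 1 := by rw [← pow_mul, mul_comm, pow_mul, hζ.pow_eq_one, one_pow]
    simp_rw [mul_pow, ← pow_mul, mul_comm _ i, pow_mul, ← mul_sum, geom_sum_eq hζi, hζin,
      sub_self, zero_div, mul_zero]
  rcases n.eq_zero_or_pos with rfl | hn
  · simp
  · rw [sum_eq_single_of_mem 0 (mem_range.mpr hn) hvanish]
    simp

theorem one_sub_pow_mul_sum_inv_one_sub_mul_pow (hζ : IsPrimitiveRoot ζ n) {a : K}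
    (ha : ∀ k ∈ range n, 1 - a * ζ ^ k ≠ 0) :
    (1 - a ^ n) * ∑ k ∈ range n, (1 - a * ζ ^ k)⁻¹ = n := by
  rw [mul_sum, ← hζ.sum_sum_mul_pow_pow_eq a]
  refine sum_congr rfl fun k hk ↦ ?_
  have hgeom := mul_neg_geom_sum (a * ζ ^ k) n
  rw [mul_pow, ← pow_mul, mul_comm k, pow_mul, hζ.pow_eq_one, one_pow, mul_one] at hgeom
  rw [← hgeom, mul_comm, ← mul_assoc, inv_mul_cancel₀ (ha k hk), one_mul]

theorem sum_inv_one_sub_mul_pow [NeZero n] (hζ : IsPrimitiveRoot ζ n) {a : K}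
    (ha : ∀ k ∈ range n, 1 - a * ζ ^ k ≠ 0) :
    1 - a ^ n ≠ 0 ∧ ∑ k ∈ range n, (1 - a * ζ ^ k)⁻¹ = n / (1 - a ^ n) := by
  have key := hζ.one_sub_pow_mul_sum_inv_one_sub_mul_pow ha
  have : NeZero (n : K) := hζ.neZero'
  have hne : 1 - a ^ n ≠ 0 := left_ne_zero_of_mul (by rw [key]; exact NeZero.ne _)
  exact ⟨hne, by rw [← key, mul_div_cancel_left₀ _ hne]⟩

theorem sum_inv_one_add_mul_pow_of_odd (hζ : IsPrimitiveRoot ζ n) (hodd : Odd n) {a : K}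
    (ha : ∀ k ∈ range n, 1 + a * ζ ^ k ≠ 0) :
    1 + a ^ n ≠ 0 ∧ ∑ k ∈ range n, (1 + a * ζ ^ k)⁻¹ = n / (1 + a ^ n) := by
  have : NeZero n := ⟨hodd.pos.ne'⟩
  simpa only [neg_mul, sub_neg_eq_add, hodd.neg_pow] using
    hζ.sum_inv_one_sub_mul_pow (a := -a) (by simpa only [neg_mul, sub_neg_eq_add] using ha)

end IsPrimitiveRoot

namespace Complex

theorem two_mul_cos_eq_exp_mul (z : ℂ) : 2 * cos z = exp (-(z * I)) * (1 + exp (2 * z * I)) := by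
  rw [two_cos, mul_add, mul_one, ← exp_add]
  ring_nf

theorem cos_eq_zero_iff_one_add_exp_eq_zero {z : ℂ} : cos z = 0 ↔ 1 + exp (2 * z * I) = 0 := by
  have h := two_mul_cos_eq_exp_mul z
  constructor <;> intro h0
  · simpa [h0, exp_ne_zero] using h.symm
  · simpa [h0] using h

theorem tan_eq_neg_I_add_of_cos_ne_zero {z : ℂ} (hz : cos z ≠ 0) :
    tan z = -I + 2 * I * (1 + exp (2 * z * I))⁻¹ := by
  have hd : 1 + exp (2 * z * I) ≠ 0 := cos_eq_zero_iff_one_add_exp_eq_zero.not.mp hz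
  have hsplit : exp (z * I) = exp (-(z * I)) * exp (2 * z * I) := by rw [← exp_add]; ring_nf
  rw [tan_eq_sin_div_cos, div_eq_iff hz, ← mul_right_inj' (two_ne_zero' ℂ), two_sin,
    mul_left_comm, two_mul_cos_eq_exp_mul, neg_mul, hsplit]
  linear_combination (-2 * I * exp (-(z * I))) * mul_inv_cancel₀ hd

end Complex

open Complex

theorem sum_tan_eq_of_odd_general (n : ℕ) (hodd : Odd n) (x : ℂ)
    (h : ∀ k ∈ Finset.range n, Complex.cos (x + (k : ℂ) * (Real.pi : ℂ) / (n : ℂ)) ≠ 0) :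
    ∑ k ∈ Finset.range n, Complex.tan (x + (k : ℂ) * (Real.pi : ℂ) / (n : ℂ)) =
      (n : ℂ) * Complex.tan ((n : ℂ) * x) := by
  set ζ := exp (2 * Real.pi * I / n)
  set w := exp (2 * x * I)
  have hshift (k : ℕ) : exp (2 * (x + k * Real.pi / n) * I) = w * ζ ^ k := by
    rw [← exp_nat_mul, ← exp_add]
    congr 1
    field_simp
  have hpow : exp (2 * (n * x) * I) = w ^ n := by
    rw [← exp_nat_mul]
    ring_nf
  have hden (k : ℕ) (hk : k ∈ range n) : 1 + w * ζ ^ k ≠ 0 := by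
    simpa only [cos_eq_zero_iff_one_add_exp_eq_zero.not, hshift] using h k hk
  obtain ⟨hw, hsum⟩ :=
    (isPrimitiveRoot_exp n hodd.pos.ne').sum_inv_one_add_mul_pow_of_odd hodd hden
  have hcos : cos (n * x) ≠ 0 := by
    rw [ne_eq, cos_eq_zero_iff_one_add_exp_eq_zero, hpow]
    exact hw
  rw [sum_congr rfl fun k hk ↦ by rw [tan_eq_neg_I_add_of_cos_ne_zero (h k hk), hshift],
    tan_eq_neg_I_add_of_cos_ne_zero hcos, hpow, sum_add_distrib, ← mul_sum, hsum]
  simp only [sum_const, card_range, nsmul_eq_mul]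
  ring

/-- For odd positive `n` and complex `x` with `cos(x + kπ/n) ≠ 0` for all `0 ≤ k ≤ n-1`,
`∑_{k=0}^{n-1} tan(x + kπ/n) = n · tan(nx)`. -/
theorem sum_tan_eq_of_odd (n : ℕ) (hn : 0 < n) (hodd : Odd n) (x : ℂ)
    (h : ∀ k ∈ Finset.range n, Complex.cos (x + (k : ℂ) * (Real.pi : ℂ) / (n : ℂ)) ≠ 0) :
    ∑ k ∈ Finset.range n, Complex.tan (x + (k : ℂ) * (Real.pi : ℂ) / (n : ℂ)) =
      (n : ℂ) * Complex.tan ((n : ℂ) * x) :=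
  sum_tan_eq_of_odd_general n hodd x h
end

section
/- For every fixed natural number m there exists a polynomial P with rational coefficients such that for every integer n ≥ 2 one has ∑_{b=1}^{n-1} (1/(ζ_n^b − 1))^m = P(n) (equality of complex numbers). -/
/-- `ζ_n = exp(2πi/n)`, the standard primitive `n`-th root of unity. -/
noncomputable def zeta (n : ℕ) : ℂ := Complex.exp (2 * (Real.pi : ℂ) * Complex.I / (n : ℂ))

/-!
Writing `α_b = 1 / (ζ^b - 1)`, the factorisation `x^n - y^n = ∏_b (x - ζ^b y)` at `x = X + 1`,
`y = X` shows `(X + 1)^n - X^n = n ∏_{b=1}^{n-1} (X - α_b)`. Comparing coefficients,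
`e_k(α) = (-1)^k C(n, k+1) / n`, a polynomial in `n`. Newton's identities express the power sum
`p_m` (`m ≥ 1`) as an integer polynomial in `e_1, …, e_m` that does not depend on the number of
variables; this uniformity is captured by working in the ring of functions of the parameter `n`.
-/

open Finset Polynomial

theorem IsPrimitiveRoot.prod_range_sub_pow_mul {R : Type*} [CommRing R] [IsDomain R] {ζ : R}
    {n : ℕ} (hζ : IsPrimitiveRoot ζ n) (hn : 0 < n) (x y : R) :
    ∏ b ∈ range n, (x - ζ ^ b * y) = x ^ n - y ^ n := by
  have : NeZero n := ⟨hn.ne'⟩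
  rw [hζ.pow_sub_pow_eq_prod_sub_mul x y hn]
  refine prod_nbij (ζ ^ ·) (fun b _ ↦ ?_) hζ.injOn_pow (fun η hη ↦ ?_) fun _ _ ↦ rfl
  · rw [Polynomial.mem_nthRootsFinset hn, ← pow_mul, mul_comm, pow_mul, hζ.pow_eq_one, one_pow]
  · obtain ⟨b, hb, rfl⟩ :=
      hζ.eq_pow_of_pow_eq_one ((Polynomial.mem_nthRootsFinset hn 1).1 hη)
    exact ⟨b, mem_range.2 hb, rfl⟩

theorem IsPrimitiveRoot.X_add_one_pow_sub_X_pow_eq {K : Type*} [Field K] {ζ : K} {n : ℕ}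
    (hζ : IsPrimitiveRoot ζ n) (hn : 0 < n) :
    (X + 1) ^ n - X ^ n =
      C (∏ b ∈ Ico 1 n, (1 - ζ ^ b)) * ∏ b ∈ Ico 1 n, (X - C (1 / (ζ ^ b - 1))) := by
  have hfactor : ∀ b ∈ Ico 1 n,
      X + 1 - C ζ ^ b * X = C (1 - ζ ^ b) * (X - C (1 / (ζ ^ b - 1))) := by
    intro b hb
    have hζb : ζ ^ b - 1 ≠ 0 :=
      sub_ne_zero.2 <| hζ.pow_ne_one_of_pos_of_lt (by grind) (by grind)
    have hconst : (1 - ζ ^ b) * (1 / (ζ ^ b - 1)) = -1 := by field_simp; ring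
    rw [mul_sub, ← C_mul, hconst]
    simp only [map_sub, map_pow, map_neg, C_1]
    ring
  rw [← (hζ.map_of_injective C_injective).prod_range_sub_pow_mul hn, range_eq_Ico,
    prod_eq_prod_Ico_succ_bot hn, prod_congr rfl hfactor, prod_mul_distrib, ← map_prod]
  simp

theorem Multiset.natCast_mul_esymm_of_X_add_one_pow_sub_X_pow_eq {R : Type*} [CommRing R]
    {s : Multiset R} {c : R} {n : ℕ} (hs : card s + 1 = n)
    (h : (X + 1) ^ n - X ^ n = C c * (s.map fun t ↦ X - C t).prod) (k : ℕ) :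
    (n : R) * s.esymm k = (-1) ^ k * n.choose (k + 1) := by
  have hcoeff (k : ℕ) : (-1) ^ k * c * s.esymm k = n.choose (k + 1) := by
    rcases le_or_gt k (card s) with hk | hk
    · have := congrArg (coeff · (card s - k)) h
      simp only [coeff_C_mul, prod_X_sub_C_coeff s (Nat.sub_le _ _), Nat.sub_sub_self hk,
        coeff_sub, coeff_X_add_one_pow, coeff_X_pow] at this
      rw [if_neg (by omega), sub_zero, ← Nat.choose_symm (by omega),
        show n - (card s - k) = k + 1 by omega] at this
      rw [this]
      ring
    · simp [esymm, powersetCard_eq_empty _ hk, Nat.choose_eq_zero_of_lt (by omega : n < k + 1)]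
  have hc : c = n := by simpa [esymm] using hcoeff 0
  rw [← hc, ← hcoeff k, ← mul_assoc, ← mul_assoc, ← pow_add,
    Even.neg_one_pow ⟨k, rfl⟩, one_mul]

theorem Multiset.sum_map_pow_eq_mul_esymm_sub_sum {R : Type*} [CommRing R] (s : Multiset R)
    (k : ℕ) (hk : 0 < k) :
    (s.map (· ^ k)).sum = (-1) ^ (k + 1) * k * s.esymm k -
      ∑ a ∈ HasAntidiagonal.antidiagonal k with a.1 ∈ Set.Ioo 0 k,
        (-1) ^ a.1 * s.esymm a.1 * (s.map (· ^ a.2)).sum := by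
  classical
  let x : s.ToType → R := fun i ↦ (i : R)
  have hesymm (j : ℕ) : MvPolynomial.aeval x (MvPolynomial.esymm s.ToType ℤ j) = s.esymm j := by
    rw [MvPolynomial.aeval_esymm_eq_multiset_esymm, map_univ_coe]
  have hpsum (j : ℕ) :
      MvPolynomial.aeval x (MvPolynomial.psum s.ToType ℤ j) = (s.map (· ^ j)).sum := by
    simp only [MvPolynomial.psum, map_sum, map_pow, MvPolynomial.aeval_X]
    rw [← map_univ_comp_coe]
    rfl
  simpa [hesymm, hpsum] using
    congrArg (MvPolynomial.aeval x) (MvPolynomial.psum_eq_mul_esymm_sub_sum s.ToType ℤ k hk)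

theorem sum_map_pow_mem_adjoin_esymm {ι R : Type*} [CommRing R] (s : ι → Multiset R) {k : ℕ}
    (hk : 0 < k) :
    (fun i ↦ ((s i).map (· ^ k)).sum) ∈
      Algebra.adjoin ℤ (Set.range fun j i ↦ (s i).esymm j) := by
  induction k using Nat.strong_induction_on with
  | _ k ih =>
    have hesymm (j : ℕ) :
        (fun i ↦ (s i).esymm j) ∈ Algebra.adjoin ℤ (Set.range fun j i ↦ (s i).esymm j) :=
      Algebra.subset_adjoin ⟨j, rfl⟩
    have hnewton : (fun i ↦ ((s i).map (· ^ k)).sum) =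
        (-1) ^ (k + 1) * k * (fun i ↦ (s i).esymm k) -
          ∑ a ∈ HasAntidiagonal.antidiagonal k with a.1 ∈ Set.Ioo 0 k,
            (-1) ^ a.1 * (fun i ↦ (s i).esymm a.1) * fun i ↦ ((s i).map (· ^ a.2)).sum := by
      ext i
      simp [Multiset.sum_map_pow_eq_mul_esymm_sub_sum (s i) k hk]
    rw [hnewton]
    refine sub_mem (mul_mem (mul_mem (pow_mem (neg_mem (one_mem _)) _)
      (Subalgebra.natCast_mem _ k)) (hesymm k)) (sum_mem fun a ha ↦
        mul_mem (mul_mem (pow_mem (neg_mem (one_mem _)) _) (hesymm a.1)) (ih a.2 ?_ ?_)) <;>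
    · simp only [mem_filter, HasAntidiagonal.mem_antidiagonal, Set.mem_Ioo] at ha
      omega

noncomputable def esymmPoly (k : ℕ) : ℚ[X] :=
  C ((-1 : ℚ) ^ k / (k + 1).factorial) * (descPochhammer ℚ k).comp (X - 1)

theorem natCast_mul_aeval_esymmPoly {K : Type*} [Field K] [CharZero K] (n k : ℕ) :
    (n : K) * aeval (n : K) (esymmPoly k) = (-1) ^ k * n.choose (k + 1) := by
  have hdesc : (n : K) * (descPochhammer K k).eval ((n : K) - 1) =
      (k + 1).factorial * n.choose (k + 1) := by
    rw [← Nat.cast_mul, ← Nat.descFactorial_eq_factorial_mul_choose,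
      ← descPochhammer_eval_eq_descFactorial, descPochhammer_succ_left]
    simp [eval_comp]
  have hfact : ((k + 1).factorial : K) ≠ 0 := Nat.cast_ne_zero.2 (Nat.factorial_ne_zero _)
  rw [esymmPoly, map_mul, aeval_C, aeval_comp, aeval_def, ← eval_map]
  simp only [aeval_X, map_sub, map_one, descPochhammer_map, eq_ratCast, Rat.cast_div,
    Rat.cast_pow, Rat.cast_neg, Rat.cast_one, Rat.cast_natCast]
  rw [mul_left_comm, hdesc]
  field_simp

theorem esymm_one_div_zeta_pow_sub_one (n : ℕ) (hn : 0 < n) (k : ℕ) :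
    ((Ico 1 n).val.map fun b ↦ 1 / (zeta n ^ b - 1)).esymm k = aeval (n : ℂ) (esymmPoly k) := by
  have hpoly : (X + 1) ^ n - X ^ n = C (∏ b ∈ Ico 1 n, (1 - zeta n ^ b)) *
      (((Ico 1 n).val.map fun b ↦ 1 / (zeta n ^ b - 1)).map fun t ↦ X - C t).prod := by
    rw [Multiset.map_map]
    exact (Complex.isPrimitiveRoot_exp n hn.ne').X_add_one_pow_sub_X_pow_eq hn
  refine mul_left_cancel₀ (Nat.cast_ne_zero.2 hn.ne') ?_
  rw [Multiset.natCast_mul_esymm_of_X_add_one_pow_sub_X_pow_eq (by simp; omega) hpoly,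
    natCast_mul_aeval_esymmPoly]

/-- For every fixed `m`, there is a polynomial `P` with rational coefficients such that
for every `n ≥ 2`, `∑_{b=1}^{n-1} (1/(ζ_n^b − 1))^m = P(n)`. -/
theorem powerSum_alpha_polynomial (m : ℕ) :
    ∃ P : Polynomial ℚ, ∀ n : ℕ, 2 ≤ n →
      ∑ b ∈ Finset.Ico 1 n, (1 / (zeta n ^ b - 1)) ^ m =
        Polynomial.aeval (n : ℂ) P := by
  rcases m.eq_zero_or_pos with rfl | hm
  · exact ⟨X - 1, fun n hn ↦ by simp [Nat.cast_sub (by omega : 1 ≤ n)]⟩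
  let s (n : {n : ℕ // 2 ≤ n}) := (Ico 1 n.1).val.map fun b ↦ 1 / (zeta n ^ b - 1)
  have hesymm : Algebra.adjoin ℤ (Set.range fun k n ↦ (s n).esymm k) ≤
      Subalgebra.restrictScalars ℤ
        (aeval (R := ℚ) fun n : {n : ℕ // 2 ≤ n} ↦ (n.1 : ℂ)).range := by
    refine Algebra.adjoin_le ?_
    rintro _ ⟨k, rfl⟩
    refine (AlgHom.mem_range _).2 ⟨esymmPoly k, funext fun n ↦ ?_⟩
    rw [aeval_pi_apply₂]
    exact (esymm_one_div_zeta_pow_sub_one n.1 (by have := n.2; omega) k).symm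
  obtain ⟨P, hP⟩ := (AlgHom.mem_range _).1 (hesymm (sum_map_pow_mem_adjoin_esymm s hm))
  refine ⟨P, fun n hn ↦ ?_⟩
  rw [← aeval_pi_apply₂ (fun n : {n : ℕ // 2 ≤ n} ↦ (n.1 : ℂ)) P ⟨n, hn⟩, hP]
  simp [s]
end

section
/- Let m be a natural number, let n and c be positive integers, and let b be an integer. Then β_m(nc, bc) = c^{1-m} · β_m(n, b), i.e. c^{m-1} · β_m(nc, bc) = β_m(n, b) when m ≥ 1, and β_0(nc, bc) = c · β_0(n, b). -/
/-- `β_{m_1,…,m_k}(n,b) = ∑_{a=0}^{n-1} ζ_n^{ab} ∏_j B_{m_j}(a/n)`, where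
`B_m` is the `m`-th Bernoulli polynomial. -/
noncomputable def betaB (M : List ℕ) (n : ℕ) (b : ℤ) : ℂ :=
  ∑ a ∈ Finset.range n, zeta n ^ ((a : ℤ) * b) *
    (M.map fun m => (((Polynomial.bernoulli m).eval ((a : ℚ) / (n : ℚ)) : ℚ) : ℂ)).prod

/-! Write `a = n s + r` with `r < n`, `s < c`. Then `ζ_{nc}^{a b c} = ζ_n^{r b}` and
`a / (nc) = (r/n + s)/c`, so summing over `s` first produces Raabe's multiplication formula
`∑_{s<c} B_m((x + s)/c) = c^{1-m} B_m(x)` at `x = r/n`. -/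

open Finset

theorem bernoulliFun_ratCast (k : ℕ) (q : ℚ) :
    bernoulliFun k q = (Polynomial.bernoulli k).eval q := by
  rw [bernoulliFun, Polynomial.eval_map_algebraMap]
  exact Polynomial.aeval_algebraMap_apply ℝ q _

namespace Polynomial

theorem sum_bernoulli_eval_add_div (k : ℕ) {c : ℕ} (hc : c ≠ 0) (x : ℚ) :
    ∑ i ∈ range c, (bernoulli k).eval ((x + i) / c) =
      (c : ℚ) ^ (1 - k : ℤ) * (bernoulli k).eval x := by
  have hc' : (c : ℚ) ≠ 0 := Nat.cast_ne_zero.mpr hc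
  have h := bernoulliFun_mul k hc (x / c : ℚ)
  have hx : ((c : ℝ) * ((x / c : ℚ) : ℝ)) = (x : ℝ) := by push_cast; field_simp
  have hi : ∀ i : ℕ, ((x / c : ℚ) : ℝ) + i / c = (((x + i) / c : ℚ) : ℝ) := by
    intro i; push_cast; ring
  simp only [hx, hi, bernoulliFun_ratCast] at h
  have hq : (bernoulli k).eval x =
      c ^ k / c * ∑ i ∈ range c, (bernoulli k).eval ((x + i) / c) := by
    apply Rat.cast_injective (α := ℝ)
    push_cast
    exact h
  rw [hq, zpow_sub₀ hc', zpow_one, zpow_natCast]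
  field_simp

end Polynomial

theorem zeta_pow_self (n : ℕ) : zeta n ^ n = 1 := by
  rcases eq_or_ne n 0 with rfl | hn
  · exact pow_zero _
  · exact (Complex.isPrimitiveRoot_exp n hn).pow_eq_one

theorem zeta_ne_zero (n : ℕ) : zeta n ≠ 0 := Complex.exp_ne_zero _

theorem zeta_zpow_add_mul_self (n : ℕ) (k j : ℤ) : zeta n ^ (k + n * j) = zeta n ^ k := by
  rw [zpow_add₀ (zeta_ne_zero n), zpow_mul, zpow_natCast, zeta_pow_self, one_zpow, mul_one]

theorem zeta_mul_pow (n : ℕ) {c : ℕ} (hc : c ≠ 0) : zeta (n * c) ^ c = zeta n := by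
  rw [zeta, zeta, ← Complex.exp_nat_mul]
  congr 1
  have : (c : ℂ) ≠ 0 := Nat.cast_ne_zero.mpr hc
  push_cast
  field_simp

theorem zeta_mul_zpow_mul (n : ℕ) {c : ℕ} (hc : c ≠ 0) (s r : ℕ) (b : ℤ) :
    zeta (n * c) ^ (((n * s + r : ℕ) : ℤ) * (b * c)) = zeta n ^ ((r : ℤ) * b) := by
  rw [show ((n * s + r : ℕ) : ℤ) * (b * c) = c * ((r : ℤ) * b + n * (s * b)) by push_cast; ring,
    zpow_mul, zpow_natCast, zeta_mul_pow n hc, zeta_zpow_add_mul_self]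

theorem betaB_singleton (m n : ℕ) (b : ℤ) :
    betaB [m] n b = ∑ a ∈ range n,
      zeta n ^ ((a : ℤ) * b) * (((Polynomial.bernoulli m).eval ((a : ℚ) / n) : ℚ) : ℂ) := by
  simp [betaB]

theorem Finset.sum_range_mul {M : Type*} [AddCommMonoid M] (f : ℕ → M) (n c : ℕ) :
    ∑ a ∈ range (n * c), f a = ∑ s ∈ range c, ∑ r ∈ range n, f (n * s + r) := by
  induction c with
  | zero => simp
  | succ c ih => rw [Nat.mul_succ, sum_range_add, ih, sum_range_succ]

theorem betaB_mul_scaling_general (m : ℕ) (n c : ℕ) (hc : 0 < c) (b : ℤ) :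
    betaB [m] (n * c) (b * (c : ℤ)) = (c : ℂ) ^ ((1 : ℤ) - (m : ℤ)) * betaB [m] n b := by
  rw [betaB_singleton, betaB_singleton, Finset.sum_range_mul, sum_comm, mul_sum]
  refine sum_congr rfl fun r hr ↦ ?_
  have hn : (n : ℚ) ≠ 0 := Nat.cast_ne_zero.mpr (by have := mem_range.mp hr; omega)
  have hx : ∀ s : ℕ, ((n * s + r : ℕ) : ℚ) / (n * c : ℕ) = (r / n + s) / c := by
    intro s
    push_cast
    field_simp
    ring
  simp_rw [zeta_mul_zpow_mul n hc.ne', hx, ← mul_sum, ← Rat.cast_sum,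
    Polynomial.sum_bernoulli_eval_add_div m hc.ne']
  push_cast
  ring

/-- `β_m(nc, bc) = c^{1-m} · β_m(n, b)`. -/
theorem betaB_mul_scaling (m : ℕ) (n c : ℕ) (hn : 0 < n) (hc : 0 < c) (b : ℤ) :
    betaB [m] (n * c) (b * (c : ℤ)) = (c : ℂ) ^ ((1 : ℤ) - (m : ℤ)) * betaB [m] n b :=
  betaB_mul_scaling_general m n c hc b
end
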